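/- arXiv:2312.04001 — 2 statements merged into one kernel-verified Lean document; each statement's English description precedes it below -/
import Mathlib

section
/- For a probability measure μ on ℝ^d that is locally lower bounded by the Lebesgue measure (i.e., there exist ε₀ > 0, a ∈ ℝ^d, τ > 0 with μ(E) ≥ ε₀·Leb(E ∩ B(a,τ)) for all Borel E), there exist p ∈ (0,1) and probability measures μ̂ and ν on ℝ^d such that μ = (1-p)·μ̂ + p·ν, where μ̂ has density c·exp(-1/(τ² - |z-a|²))·1_{B(a,τ)}(z) with respect to Lebesgue measure (c the normalizing constant). -/
/-! The bump `exp (-1 / (τ² - ‖z - a‖²))` is positive and at most `1` on the ball `B = B(a, τ)`,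
so its normalisation `μ̂` has density at most `c = (∫_B bump)⁻¹` on `B`. Hence
`q • μ̂ ≤ ε₀ • Leb|_B ≤ μ` as soon as `q c ≤ ε₀`, and the remainder `μ - q • μ̂` is `(1 - q)` times
a probability measure. -/

open MeasureTheory Set

noncomputable section

section Decomposition

variable {X : Type*} [MeasurableSpace X]

theorem exists_isProbabilityMeasure_eq_smul_add_smul_of_smul_le (μ ρ : Measure X)
    [IsProbabilityMeasure μ] [IsProbabilityMeasure ρ] {p : ℝ} (hp₀ : 0 < p) (hp₁ : p ≤ 1)
    (hle : ENNReal.ofReal (1 - p) • ρ ≤ μ) :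
    ∃ ν : Measure X, IsProbabilityMeasure ν ∧
      μ = ENNReal.ofReal (1 - p) • ρ + ENNReal.ofReal p • ν := by
  have hp : ENNReal.ofReal p ≠ 0 := (ENNReal.ofReal_pos.mpr hp₀).ne'
  have : IsFiniteMeasure (ENNReal.ofReal (1 - p) • ρ) := isFiniteMeasure_of_le μ hle
  have hrest : (μ - ENNReal.ofReal (1 - p) • ρ) univ = ENNReal.ofReal p := by
    rw [Measure.sub_apply MeasurableSet.univ hle, measure_univ, Measure.smul_apply, measure_univ,
      smul_eq_mul, mul_one, ← ENNReal.ofReal_one, ← ENNReal.ofReal_sub _ (sub_nonneg.mpr hp₁),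
      sub_sub_cancel]
  refine ⟨(ENNReal.ofReal p)⁻¹ • (μ - ENNReal.ofReal (1 - p) • ρ), ⟨?_⟩, ?_⟩
  · rw [Measure.smul_apply, hrest, smul_eq_mul, ENNReal.inv_mul_cancel hp ENNReal.ofReal_ne_top]
  · rw [smul_smul, ENNReal.mul_inv_cancel hp ENNReal.ofReal_ne_top, one_smul, add_comm,
      Measure.sub_add_cancel_of_le hle]

end Decomposition

section Density

variable {X : Type*} [MeasurableSpace X] (m : Measure X) {B : Set X}

theorem isProbabilityMeasure_withDensity_indicator_inv_integral_mul (hB : MeasurableSet B)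
    {f : X → ℝ} (hf : IntegrableOn f B m) (hf₀ : ∀ x ∈ B, 0 ≤ f x)
    (hI : 0 < ∫ x in B, f x ∂m) :
    IsProbabilityMeasure (m.withDensity fun x =>
      ENNReal.ofReal (B.indicator (fun x => (∫ w in B, f w ∂m)⁻¹ * f x) x)) := by
  constructor
  have hint : Integrable (B.indicator fun x => (∫ w in B, f w ∂m)⁻¹ * f x) m :=
    (integrable_indicator_iff hB).mpr (hf.const_mul _)
  have hnonneg : 0 ≤ᵐ[m] B.indicator fun x => (∫ w in B, f w ∂m)⁻¹ * f x :=
    Filter.Eventually.of_forall <|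
      indicator_nonneg fun x hx => mul_nonneg (inv_pos.mpr hI).le (hf₀ x hx)
  rw [withDensity_apply _ MeasurableSet.univ, Measure.restrict_univ,
    ← ofReal_integral_eq_lintegral_ofReal hint hnonneg, integral_indicator hB, integral_const_mul,
    inv_mul_cancel₀ hI.ne', ENNReal.ofReal_one]

theorem withDensity_ofReal_indicator_le (hB : MeasurableSet B) {g : X → ℝ} {C : ℝ}
    (hg : ∀ x ∈ B, g x ≤ C) :
    m.withDensity (fun x => ENNReal.ofReal (B.indicator g x)) ≤
      ENNReal.ofReal C • m.restrict B := by
  have hcomp : (fun x => ENNReal.ofReal (B.indicator g x)) = B.indicator (ENNReal.ofReal ∘ g) :=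
    (indicator_comp_of_zero ENNReal.ofReal_zero).symm
  rw [hcomp, withDensity_indicator hB, ← withDensity_const]
  refine withDensity_mono ?_
  filter_upwards [ae_restrict_mem hB] with x hx using ENNReal.ofReal_le_ofReal (hg x hx)

end Density

section Bump

variable {E : Type*} [NormedAddCommGroup E]

def bump (a : E) (τ : ℝ) (z : E) : ℝ := Real.exp (-(τ ^ 2 - ‖z - a‖ ^ 2)⁻¹)

theorem bump_pos (a : E) (τ : ℝ) (z : E) : 0 < bump a τ z := Real.exp_pos _

theorem bump_le_one {a z : E} {τ : ℝ} (hz : z ∈ Metric.ball a τ) : bump a τ z ≤ 1 := by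
  have hlt : ‖z - a‖ < τ := by rwa [Metric.mem_ball, dist_eq_norm] at hz
  refine Real.exp_le_one_iff.mpr (neg_nonpos.mpr (inv_nonneg.mpr ?_))
  nlinarith [norm_nonneg (z - a)]

variable [MeasurableSpace E] [BorelSpace E]

theorem measurable_bump (a : E) (τ : ℝ) : Measurable (bump a τ) := by
  have : Measurable fun z : E => ‖z - a‖ := (continuous_id.sub continuous_const).norm.measurable
  unfold bump
  fun_prop

variable [ProperSpace E] (m : Measure E) [IsFiniteMeasureOnCompacts m]

theorem integrableOn_bump_ball (a : E) (τ : ℝ) : IntegrableOn (bump a τ) (Metric.ball a τ) m := by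
  refine Measure.integrableOn_of_bounded (M := 1) measure_ball_lt_top.ne
    (measurable_bump a τ).aestronglyMeasurable ?_
  filter_upwards [ae_restrict_mem measurableSet_ball] with z hz
  rw [Real.norm_eq_abs, abs_of_pos (bump_pos a τ z)]
  exact bump_le_one hz

theorem setIntegral_bump_ball_pos [m.IsOpenPosMeasure] (a : E) {τ : ℝ} (hτ : 0 < τ) :
    0 < ∫ z in Metric.ball a τ, bump a τ z ∂m := by
  have : NeZero (m.restrict (Metric.ball a τ)) :=
    ⟨by simpa using (Metric.measure_ball_pos m a hτ).ne'⟩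
  exact integral_exp_pos (integrableOn_bump_ball m a τ)

end Bump

theorem stmt_0 {d : ℕ} (μ : Measure (EuclideanSpace ℝ (Fin d))) [IsProbabilityMeasure μ]
    (ε₀ τ : ℝ) (a : EuclideanSpace ℝ (Fin d)) (hε : 0 < ε₀) (hτ : 0 < τ)
    (hlb : ∀ E : Set (EuclideanSpace ℝ (Fin d)), MeasurableSet E →
      ENNReal.ofReal ε₀ * volume (E ∩ Metric.ball a τ) ≤ μ E) :
    ∃ p : ℝ, p ∈ Set.Ioo (0 : ℝ) 1 ∧
      ∃ μhat ν : Measure (EuclideanSpace ℝ (Fin d)),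
        IsProbabilityMeasure μhat ∧ IsProbabilityMeasure ν ∧
        μhat = volume.withDensity (fun z =>
          ENNReal.ofReal ((Metric.ball a τ).indicator
            (fun z => (∫ w in Metric.ball a τ, Real.exp (-(τ ^ 2 - ‖w - a‖ ^ 2)⁻¹))⁻¹ *
              Real.exp (-(τ ^ 2 - ‖z - a‖ ^ 2)⁻¹)) z)) ∧
        μ = ENNReal.ofReal (1 - p) • μhat + ENNReal.ofReal p • ν := by
  set B := Metric.ball a τ
  set I := ∫ z in B, bump a τ z
  have hI : 0 < I := setIntegral_bump_ball_pos volume a hτ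
  set μhat := volume.withDensity fun z => ENNReal.ofReal (B.indicator (fun z => I⁻¹ * bump a τ z) z)
  have hμhat : IsProbabilityMeasure μhat :=
    isProbabilityMeasure_withDensity_indicator_inv_integral_mul volume measurableSet_ball
      (integrableOn_bump_ball volume a τ) (fun z _ => (bump_pos a τ z).le) hI
  have hμhat_le : μhat ≤ ENNReal.ofReal I⁻¹ • volume.restrict B :=
    withDensity_ofReal_indicator_le volume measurableSet_ball fun z hz =>
      mul_le_of_le_one_right (inv_pos.mpr hI).le (bump_le_one hz)
  have hμ_ge : ENNReal.ofReal ε₀ • volume.restrict B ≤ μ := Measure.le_iff.mpr fun E hE => by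
    simpa [Measure.restrict_apply hE] using hlb E hE
  set q := min (1 / 2) (ε₀ * I)
  have hq₀ : 0 < q := lt_min one_half_pos (mul_pos hε hI)
  have hq₁ : q ≤ 1 / 2 := min_le_left _ _
  have hqI : q * I⁻¹ ≤ ε₀ := by
    calc q * I⁻¹ ≤ ε₀ * I * I⁻¹ := by gcongr; exact min_le_right _ _
      _ = ε₀ := mul_inv_cancel_right₀ hI.ne' ε₀
  have hle : ENNReal.ofReal (1 - (1 - q)) • μhat ≤ μ := by
    calc ENNReal.ofReal (1 - (1 - q)) • μhat
        ≤ ENNReal.ofReal q • ENNReal.ofReal I⁻¹ • volume.restrict B := by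
          rw [sub_sub_cancel]; gcongr
      _ ≤ ENNReal.ofReal ε₀ • volume.restrict B := by
          rw [smul_smul, ← ENNReal.ofReal_mul hq₀.le]; gcongr
      _ ≤ μ := hμ_ge
  obtain ⟨ν, hν, hμ⟩ := exists_isProbabilityMeasure_eq_smul_add_smul_of_smul_le μ μhat
    (p := 1 - q) (by linarith) (by linarith) hle
  exact ⟨1 - q, ⟨by linarith, by linarith⟩, μhat, ν, hμhat, hν, rfl, hμ⟩
end
end

section
/- Let α ∈ (1,2), ν a probability measure on S^{d-1}, and L^{α,ν} f(x) = d_α ∫_{S^{d-1}} ν(dθ) ∫_0^∞ [f(x+rθ) - f(x) - ⟨∇f(x), rθ⟩] r^{-1-α} dr for f ∈ C_b²(ℝ^d). Then there is a constant C (depending only on α) such that for all f ∈ C_b²(ℝ^d) and all x,y ∈ ℝ^d: |L^{α,ν} f(x) - L^{α,ν} f(y)| ≤ C ‖∇²f‖_{op,∞} |x-y|^{2-α}. -/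
/-!
Write `δ = ‖x - y‖` and split each radial integral at `r = δ`. For `r ≤ δ` each first-order
Taylor remainder is at most `‖∇²f‖ r²`, so this part contributes `∫₀^δ r^{1-α} dr ∼ δ^{2-α}`.
For `r > δ` the remainders at `x` and at `y` differ by at most `2 ‖∇²f‖ r δ`, so this part
contributes `δ ∫_δ^∞ r^{-α} dr ∼ δ^{2-α}`. Each radial integral converges at infinity because
a bounded gradient makes the remainder grow at most linearly in `r`.
-/

open MeasureTheory Set

noncomputable section

/-- The generator `L^{α,ν}` (compensated form, for `α ∈ (1,2)`). -/
def genL {d : ℕ} (α : ℝ)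
    (ν : Measure (Metric.sphere (0 : EuclideanSpace ℝ (Fin d)) 1))
    (f : EuclideanSpace ℝ (Fin d) → ℝ) (x : EuclideanSpace ℝ (Fin d)) : ℝ :=
  (∫ y in Set.Ioi (0 : ℝ), (1 - Real.cos y) / y ^ (1 + α))⁻¹ *
    ∫ θ, (∫ r in Set.Ioi (0 : ℝ),
      (f (x + r • (θ : EuclideanSpace ℝ (Fin d))) - f x -
        fderiv ℝ f x (r • (θ : EuclideanSpace ℝ (Fin d)))) / r ^ (1 + α)) ∂ν

section PowerIntegrals

lemma setIntegral_Ioc_zero_rpow {s δ : ℝ} (hs : -1 < s) (hδ : 0 ≤ δ) :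
    ∫ r in Ioc 0 δ, r ^ s = δ ^ (s + 1) / (s + 1) := by
  rw [← intervalIntegral.integral_of_le hδ, integral_rpow (Or.inl hs),
    Real.zero_rpow (by linarith), sub_zero]

lemma integrableOn_Ioc_zero_rpow {s δ : ℝ} (hs : -1 < s) (hδ : 0 ≤ δ) :
    IntegrableOn (fun r : ℝ => r ^ s) (Ioc 0 δ) :=
  (intervalIntegrable_iff_integrableOn_Ioc_of_le hδ).1
    (intervalIntegral.intervalIntegrable_rpow' hs)

lemma abs_div_rpow_le {N K p r α : ℝ} (hr : 0 < r) (h : |N| ≤ K * r ^ p) :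
    |N / r ^ (1 + α)| ≤ K * r ^ (p - 1 - α) := by
  have hpos := Real.rpow_pos_of_pos hr (1 + α)
  rwa [abs_div, abs_of_pos hpos, div_le_iff₀ hpos, mul_assoc, ← Real.rpow_add hr,
    show p - 1 - α + (1 + α) = p by ring]

variable {α δ A B : ℝ} {g : ℝ → ℝ} (hα1 : 1 < α) (hα2 : α < 2) (hδ : 0 < δ)
  (hg : ContinuousOn g (Ioi 0))
  (hsmall : ∀ r ∈ Ioc 0 δ, |g r| ≤ A * r ^ (1 - α))
  (hlarge : ∀ r ∈ Ioi δ, |g r| ≤ B * r ^ (-α))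
include hα1 hα2 hδ hg hsmall hlarge

lemma integrableOn_Ioi_zero_of_abs_le_rpow : IntegrableOn g (Ioi 0) := by
  rw [← Ioc_union_Ioi_eq_Ioi hδ.le]
  refine IntegrableOn.union ?_ ?_
  · refine Integrable.mono'
      ((integrableOn_Ioc_zero_rpow (s := 1 - α) (by linarith) hδ.le).const_mul A)
      ((hg.mono Ioc_subset_Ioi_self).aestronglyMeasurable measurableSet_Ioc) ?_
    filter_upwards [ae_restrict_mem measurableSet_Ioc] with r hr
    exact (Real.norm_eq_abs _).trans_le (hsmall r hr)
  · refine Integrable.mono'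
      ((integrableOn_Ioi_rpow_of_lt (a := -α) (by linarith) hδ).const_mul B)
      ((hg.mono (Ioi_subset_Ioi hδ.le)).aestronglyMeasurable measurableSet_Ioi) ?_
    filter_upwards [ae_restrict_mem measurableSet_Ioi] with r hr
    exact (Real.norm_eq_abs _).trans_le (hlarge r hr)

lemma abs_setIntegral_Ioi_zero_le_of_abs_le_rpow :
    |∫ r in Ioi 0, g r| ≤ A * δ ^ (2 - α) / (2 - α) + B * δ ^ (1 - α) / (α - 1) := by
  have hint := integrableOn_Ioi_zero_of_abs_le_rpow hα1 hα2 hδ hg hsmall hlarge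
  rw [← Ioc_union_Ioi_eq_Ioi hδ.le] at hint ⊢
  rw [setIntegral_union (Ioc_disjoint_Ioi le_rfl) measurableSet_Ioi
    (hint.mono_set subset_union_left) (hint.mono_set subset_union_right)]
  have h_small : |∫ r in Ioc 0 δ, g r| ≤ A * δ ^ (2 - α) / (2 - α) := by
    have := norm_integral_le_of_norm_le
      ((integrableOn_Ioc_zero_rpow (s := 1 - α) (by linarith) hδ.le).const_mul A)
      ((ae_restrict_iff' measurableSet_Ioc).2
        (.of_forall fun r hr => (Real.norm_eq_abs _).trans_le (hsmall r hr)))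
    rwa [Real.norm_eq_abs, integral_const_mul, setIntegral_Ioc_zero_rpow (by linarith) hδ.le,
      show 1 - α + 1 = 2 - α by ring, ← mul_div_assoc] at this
  have h_large : |∫ r in Ioi δ, g r| ≤ B * δ ^ (1 - α) / (α - 1) := by
    have := norm_integral_le_of_norm_le
      ((integrableOn_Ioi_rpow_of_lt (a := -α) (by linarith) hδ).const_mul B)
      ((ae_restrict_iff' measurableSet_Ioi).2
        (.of_forall fun r hr => (Real.norm_eq_abs _).trans_le (hlarge r hr)))
    rwa [Real.norm_eq_abs, integral_const_mul, integral_Ioi_rpow_of_lt (by linarith) hδ,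
      neg_div, ← div_neg, neg_add', neg_neg, show -α + 1 = 1 - α by ring, ← mul_div_assoc] at this
  exact (abs_add_le _ _).trans (add_le_add h_small h_large)

end PowerIntegrals

section TaylorRemainder

variable {E F : Type*} [NormedAddCommGroup E] [NormedSpace ℝ E]
  [NormedAddCommGroup F] [NormedSpace ℝ F] {f : E → F} {M : ℝ}

def firstOrderRemainder (f : E → F) (x v : E) : F :=
  f (x + v) - f x - fderiv ℝ f x v

lemma norm_fderiv_fderiv_le (hM : ∀ z, ‖iteratedFDeriv ℝ 2 f z‖ ≤ M) (z : E) :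
    ‖fderiv ℝ (fderiv ℝ f) z‖ ≤ M := by
  rw [← norm_iteratedFDeriv_one, norm_iteratedFDeriv_fderiv]
  exact hM z

lemma norm_fderiv_sub_fderiv_le (hf : ContDiff ℝ 2 f) (hM : ∀ z, ‖iteratedFDeriv ℝ 2 f z‖ ≤ M)
    (z w : E) : ‖fderiv ℝ f z - fderiv ℝ f w‖ ≤ M * ‖z - w‖ :=
  convex_univ.norm_image_sub_le_of_norm_fderiv_le
    (fun u _ => (hf.fderiv_right (m := 1) le_rfl).differentiable one_ne_zero u)
    (fun u _ => norm_fderiv_fderiv_le hM u) (mem_univ w) (mem_univ z)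

lemma norm_firstOrderRemainder_le_of_fderiv (hf : Differentiable ℝ f)
    (hM : ∀ z, ‖fderiv ℝ f z‖ ≤ M) (x v : E) : ‖firstOrderRemainder f x v‖ ≤ 2 * M * ‖v‖ := by
  have h_incr : ‖f (x + v) - f x‖ ≤ M * ‖v‖ := by
    simpa using convex_univ.norm_image_sub_le_of_norm_fderiv_le (fun u _ => hf u)
      (fun u _ => hM u) (mem_univ x) (mem_univ (x + v))
  calc ‖firstOrderRemainder f x v‖ ≤ ‖f (x + v) - f x‖ + ‖fderiv ℝ f x v‖ := norm_sub_le _ _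
    _ ≤ M * ‖v‖ + M * ‖v‖ := add_le_add h_incr (((fderiv ℝ f x).le_opNorm v).trans
        (mul_le_mul_of_nonneg_right (hM x) (norm_nonneg v)))
    _ = 2 * M * ‖v‖ := by ring

lemma norm_firstOrderRemainder_le_of_iteratedFDeriv (hf : ContDiff ℝ 2 f)
    (hM : ∀ z, ‖iteratedFDeriv ℝ 2 f z‖ ≤ M) (x v : E) :
    ‖firstOrderRemainder f x v‖ ≤ M * ‖v‖ ^ 2 := by
  have hM0 : 0 ≤ M := (norm_nonneg _).trans (hM x)
  have := (convex_closedBall x ‖v‖).norm_image_sub_le_of_norm_fderiv_le'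
    (fun u _ => hf.differentiable two_ne_zero u) (φ := fderiv ℝ f x)
    (fun u hu => (norm_fderiv_sub_fderiv_le hf hM u x).trans
      (mul_le_mul_of_nonneg_left (mem_closedBall_iff_norm.1 hu) hM0))
    (Metric.mem_closedBall_self (norm_nonneg v))
    (show x + v ∈ Metric.closedBall x ‖v‖ by simp)
  simpa [firstOrderRemainder, sq, mul_assoc] using this

lemma norm_firstOrderRemainder_sub_le (hf : ContDiff ℝ 2 f)
    (hM : ∀ z, ‖iteratedFDeriv ℝ 2 f z‖ ≤ M) (x y v : E) :
    ‖firstOrderRemainder f x v - firstOrderRemainder f y v‖ ≤ 2 * M * ‖v‖ * ‖x - y‖ := by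
  have hdf : Differentiable ℝ f := hf.differentiable two_ne_zero
  have h_shift : ∀ z, HasFDerivAt (fun z => f (z + v) - f z)
      (fderiv ℝ f (z + v) - fderiv ℝ f z) z := fun z =>
    ((hasFDerivAt_comp_add_right v).2 (hdf (z + v)).hasFDerivAt).sub (hdf z).hasFDerivAt
  have h_incr : ‖(f (x + v) - f x) - (f (y + v) - f y)‖ ≤ M * ‖v‖ * ‖x - y‖ :=
    convex_univ.norm_image_sub_le_of_norm_hasFDerivWithin_le
      (fun z _ => (h_shift z).hasFDerivWithinAt)
      (fun z _ => by simpa using norm_fderiv_sub_fderiv_le hf hM (z + v) z)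
      (mem_univ y) (mem_univ x)
  have h_lin : ‖(fderiv ℝ f x - fderiv ℝ f y) v‖ ≤ M * ‖v‖ * ‖x - y‖ :=
    calc ‖(fderiv ℝ f x - fderiv ℝ f y) v‖ ≤ M * ‖x - y‖ * ‖v‖ :=
          ((fderiv ℝ f x - fderiv ℝ f y).le_opNorm v).trans (mul_le_mul_of_nonneg_right
            (norm_fderiv_sub_fderiv_le hf hM x y) (norm_nonneg v))
      _ = M * ‖v‖ * ‖x - y‖ := by ring
  calc ‖firstOrderRemainder f x v - firstOrderRemainder f y v‖
      = ‖((f (x + v) - f x) - (f (y + v) - f y)) - (fderiv ℝ f x - fderiv ℝ f y) v‖ := by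
        rw [firstOrderRemainder, firstOrderRemainder, sub_apply]; abel_nf
    _ ≤ M * ‖v‖ * ‖x - y‖ + M * ‖v‖ * ‖x - y‖ :=
        (norm_sub_le _ _).trans (add_le_add h_incr h_lin)
    _ = 2 * M * ‖v‖ * ‖x - y‖ := by ring

end TaylorRemainder

section RadialIntegrand

variable {E : Type*} [NormedAddCommGroup E] [NormedSpace ℝ E] {f : E → ℝ} {α M : ℝ}

def radialIntegrand (α : ℝ) (f : E → ℝ) (x θ : E) (r : ℝ) : ℝ :=
  firstOrderRemainder f x (r • θ) / r ^ (1 + α)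

lemma continuousOn_radialIntegrand {X : Type*} [TopologicalSpace X] (hf : Continuous f) (x : E)
    {θ : X → E} {r : X → ℝ} (hθ : Continuous θ) (hr : Continuous r) :
    ContinuousOn (fun p => radialIntegrand α f x (θ p) (r p)) {p | 0 < r p} := by
  have h_num : Continuous fun p => firstOrderRemainder f x (r p • θ p) := by
    unfold firstOrderRemainder; fun_prop
  exact h_num.continuousOn.div (hr.continuousOn.rpow_const fun p hp => Or.inl (ne_of_gt hp))
    fun p hp => (Real.rpow_pos_of_pos hp _).ne'

lemma continuousOn_radialIntegrand_Ioi (hf : Continuous f) (x θ : E) :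
    ContinuousOn (radialIntegrand α f x θ) (Ioi 0) :=
  continuousOn_radialIntegrand hf x continuous_const continuous_id

variable {x y θ : E} {r : ℝ}

lemma norm_smul_of_norm_eq_one (hθ : ‖θ‖ = 1) (hr : 0 < r) : ‖r • θ‖ = r := by
  rw [norm_smul, hθ, mul_one, Real.norm_of_nonneg hr.le]

lemma abs_radialIntegrand_le_of_iteratedFDeriv (hf : ContDiff ℝ 2 f)
    (hM : ∀ z, ‖iteratedFDeriv ℝ 2 f z‖ ≤ M) (hθ : ‖θ‖ = 1) (hr : 0 < r) :
    |radialIntegrand α f x θ r| ≤ M * r ^ (1 - α) := by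
  have h := norm_firstOrderRemainder_le_of_iteratedFDeriv hf hM x (r • θ)
  rw [Real.norm_eq_abs, norm_smul_of_norm_eq_one hθ hr, ← Real.rpow_two] at h
  rw [radialIntegrand]
  simpa only [show (2 : ℝ) - 1 - α = 1 - α by ring] using abs_div_rpow_le (α := α) hr h

lemma abs_radialIntegrand_le_of_fderiv (hf : Differentiable ℝ f)
    (hM : ∀ z, ‖fderiv ℝ f z‖ ≤ M) (hθ : ‖θ‖ = 1) (hr : 0 < r) :
    |radialIntegrand α f x θ r| ≤ 2 * M * r ^ (-α) := by
  have h := norm_firstOrderRemainder_le_of_fderiv hf hM x (r • θ)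
  rw [Real.norm_eq_abs, norm_smul_of_norm_eq_one hθ hr] at h
  rw [radialIntegrand]
  simpa only [show (1 : ℝ) - 1 - α = -α by ring] using
    abs_div_rpow_le (α := α) (p := 1) hr (by rwa [Real.rpow_one])

lemma abs_radialIntegrand_sub_le (hf : ContDiff ℝ 2 f)
    (hM : ∀ z, ‖iteratedFDeriv ℝ 2 f z‖ ≤ M) (hθ : ‖θ‖ = 1) (hr : 0 < r) :
    |radialIntegrand α f x θ r - radialIntegrand α f y θ r| ≤ 2 * M * ‖x - y‖ * r ^ (-α) := by
  have h := norm_firstOrderRemainder_sub_le hf hM x y (r • θ)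
  rw [Real.norm_eq_abs, norm_smul_of_norm_eq_one hθ hr, mul_right_comm] at h
  rw [radialIntegrand, radialIntegrand, ← sub_div]
  simpa only [show (1 : ℝ) - 1 - α = -α by ring] using
    abs_div_rpow_le (α := α) (p := 1) hr (by rwa [Real.rpow_one])

variable {M₁ M₂ : ℝ} (hα1 : 1 < α) (hα2 : α < 2) (hf : ContDiff ℝ 2 f)
  (hM₁ : ∀ z, ‖fderiv ℝ f z‖ ≤ M₁) (hM₂ : ∀ z, ‖iteratedFDeriv ℝ 2 f z‖ ≤ M₂)
include hα1 hα2 hf hM₁ hM₂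

lemma integrableOn_radialIntegrand (hθ : ‖θ‖ = 1) :
    IntegrableOn (radialIntegrand α f x θ) (Ioi 0) :=
  integrableOn_Ioi_zero_of_abs_le_rpow hα1 hα2 one_pos
    (continuousOn_radialIntegrand_Ioi hf.continuous x θ)
    (fun _ hr => abs_radialIntegrand_le_of_iteratedFDeriv hf hM₂ hθ hr.1)
    (fun _ hr => abs_radialIntegrand_le_of_fderiv (hf.differentiable two_ne_zero) hM₁ hθ
      (one_pos.trans hr))

lemma abs_integral_radialIntegrand_le (hθ : ‖θ‖ = 1) :
    |∫ r in Ioi 0, radialIntegrand α f x θ r| ≤ M₂ / (2 - α) + 2 * M₁ / (α - 1) := by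
  simpa using abs_setIntegral_Ioi_zero_le_of_abs_le_rpow hα1 hα2 one_pos
    (continuousOn_radialIntegrand_Ioi hf.continuous x θ)
    (fun _ hr => abs_radialIntegrand_le_of_iteratedFDeriv hf hM₂ hθ hr.1)
    (fun _ hr => abs_radialIntegrand_le_of_fderiv (hf.differentiable two_ne_zero) hM₁ hθ
      (one_pos.trans hr))

lemma abs_integral_radialIntegrand_sub_le (hθ : ‖θ‖ = 1) :
    |(∫ r in Ioi 0, radialIntegrand α f x θ r) - ∫ r in Ioi 0, radialIntegrand α f y θ r| ≤
      2 * M₂ * (1 / (2 - α) + 1 / (α - 1)) * ‖x - y‖ ^ (2 - α) := by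
  rcases eq_or_ne x y with rfl | hxy
  · simp [Real.zero_rpow (by linarith : (2 - α) ≠ 0)]
  set δ := ‖x - y‖
  have hδ : 0 < δ := norm_pos_iff.2 (sub_ne_zero.2 hxy)
  rw [← integral_sub (integrableOn_radialIntegrand hα1 hα2 hf hM₁ hM₂ hθ)
    (integrableOn_radialIntegrand hα1 hα2 hf hM₁ hM₂ hθ)]
  refine (abs_setIntegral_Ioi_zero_le_of_abs_le_rpow hα1 hα2 hδ
    (A := 2 * M₂) (B := 2 * M₂ * δ) ?_ ?_ ?_).trans_eq ?_
  · exact (continuousOn_radialIntegrand_Ioi hf.continuous x θ).sub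
      (continuousOn_radialIntegrand_Ioi hf.continuous y θ)
  · intro r hr
    calc |radialIntegrand α f x θ r - radialIntegrand α f y θ r|
        ≤ |radialIntegrand α f x θ r| + |radialIntegrand α f y θ r| := abs_sub _ _
      _ ≤ M₂ * r ^ (1 - α) + M₂ * r ^ (1 - α) :=
        add_le_add (abs_radialIntegrand_le_of_iteratedFDeriv hf hM₂ hθ hr.1)
          (abs_radialIntegrand_le_of_iteratedFDeriv hf hM₂ hθ hr.1)
      _ = 2 * M₂ * r ^ (1 - α) := by ring
  · exact fun r hr => abs_radialIntegrand_sub_le hf hM₂ hθ (hδ.trans hr)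
  · rw [show (2 : ℝ) - α = 1 + (1 - α) by ring, Real.rpow_add hδ, Real.rpow_one]
    field_simp

end RadialIntegrand

section Sphere

variable {E : Type*} [NormedAddCommGroup E] [NormedSpace ℝ E] [MeasurableSpace E] [BorelSpace E]
  {f : E → ℝ} {α : ℝ} (ν : Measure (Metric.sphere (0 : E) 1))

lemma aestronglyMeasurable_integral_radialIntegrand [SFinite ν] (hf : Continuous f) (x : E) :
    AEStronglyMeasurable
      (fun θ : Metric.sphere (0 : E) 1 => ∫ r in Ioi 0, radialIntegrand α f x θ r) ν := by
  have h_cont : ContinuousOn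
      (fun p : Metric.sphere (0 : E) 1 × ℝ => radialIntegrand α f x p.1 p.2) (univ ×ˢ Ioi 0) :=
    (continuousOn_radialIntegrand hf x (continuous_subtype_val.comp continuous_fst)
      continuous_snd).mono fun _ hp => hp.2
  have h_meas : AEStronglyMeasurable
      (fun p : Metric.sphere (0 : E) 1 × ℝ => radialIntegrand α f x p.1 p.2)
      (ν.prod (volume.restrict (Ioi 0))) := by
    rw [← Measure.restrict_univ (μ := ν), Measure.prod_restrict]
    exact h_cont.aestronglyMeasurable (MeasurableSet.univ.prod measurableSet_Ioi)
  exact h_meas.integral_prod_right'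

variable {M₁ M₂ : ℝ} (hα1 : 1 < α) (hα2 : α < 2) (hf : ContDiff ℝ 2 f)
  (hM₁ : ∀ z, ‖fderiv ℝ f z‖ ≤ M₁) (hM₂ : ∀ z, ‖iteratedFDeriv ℝ 2 f z‖ ≤ M₂)
include hα1 hα2 hf hM₁ hM₂

lemma integrable_integral_radialIntegrand [IsFiniteMeasure ν] (x : E) :
    Integrable (fun θ : Metric.sphere (0 : E) 1 => ∫ r in Ioi 0, radialIntegrand α f x θ r) ν :=
  .mono' (integrable_const _) (aestronglyMeasurable_integral_radialIntegrand ν hf.continuous x)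
    (.of_forall fun θ => (Real.norm_eq_abs _).trans_le <|
      abs_integral_radialIntegrand_le hα1 hα2 hf hM₁ hM₂ (norm_eq_of_mem_sphere θ))

lemma abs_integral_sphere_radialIntegrand_sub_le [IsProbabilityMeasure ν] (x y : E) :
    |(∫ θ, (∫ r in Ioi 0, radialIntegrand α f x θ r) ∂ν) -
        ∫ θ, (∫ r in Ioi 0, radialIntegrand α f y θ r) ∂ν| ≤
      2 * M₂ * (1 / (2 - α) + 1 / (α - 1)) * ‖x - y‖ ^ (2 - α) := by
  rw [← integral_sub (integrable_integral_radialIntegrand ν hα1 hα2 hf hM₁ hM₂ x)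
    (integrable_integral_radialIntegrand ν hα1 hα2 hf hM₁ hM₂ y)]
  simpa using norm_integral_le_of_norm_le_const (μ := ν) (.of_forall fun θ =>
    (Real.norm_eq_abs _).trans_le <|
      abs_integral_radialIntegrand_sub_le hα1 hα2 hf hM₁ hM₂ (norm_eq_of_mem_sphere θ))

end Sphere

lemma genL_eq_integral_radialIntegrand {d : ℕ} (α : ℝ)
    (ν : Measure (Metric.sphere (0 : EuclideanSpace ℝ (Fin d)) 1))
    (f : EuclideanSpace ℝ (Fin d) → ℝ) (x : EuclideanSpace ℝ (Fin d)) :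
    genL α ν f x = (∫ y in Ioi (0 : ℝ), (1 - Real.cos y) / y ^ (1 + α))⁻¹ *
      ∫ θ, (∫ r in Ioi 0, radialIntegrand α f x θ r) ∂ν :=
  rfl

theorem stmt_7 {d : ℕ} (α : ℝ) (hα : α ∈ Set.Ioo (1 : ℝ) 2)
    (ν : Measure (Metric.sphere (0 : EuclideanSpace ℝ (Fin d)) 1))
    [IsProbabilityMeasure ν] :
    ∃ C > (0 : ℝ), ∀ f : EuclideanSpace ℝ (Fin d) → ℝ, ContDiff ℝ 2 f →
      (∃ M0, ∀ x, |f x| ≤ M0) → (∃ M1, ∀ x, ‖fderiv ℝ f x‖ ≤ M1) →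
      ∀ M2 : ℝ, (∀ x, ‖iteratedFDeriv ℝ 2 f x‖ ≤ M2) →
      ∀ x y : EuclideanSpace ℝ (Fin d),
        |genL α ν f x - genL α ν f y| ≤ C * M2 * ‖x - y‖ ^ (2 - α) := by
  obtain ⟨hα1, hα2⟩ := hα
  set c := (∫ y in Ioi (0 : ℝ), (1 - Real.cos y) / y ^ (1 + α))⁻¹
  set K := 2 * (1 / (2 - α) + 1 / (α - 1))
  have hK : 0 < K := by
    have : 0 < 2 - α := by linarith
    have : 0 < α - 1 := by linarith
    positivity
  -- `|c| + 1` makes the constant positive without evaluating the normalising integral.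
  refine ⟨(|c| + 1) * K, by positivity, fun f hf _ ⟨M₁, hM₁⟩ M₂ hM₂ x y => ?_⟩
  have h_sphere := abs_integral_sphere_radialIntegrand_sub_le ν hα1 hα2 hf hM₁ hM₂ x y
  calc |genL α ν f x - genL α ν f y|
      = |c| * |(∫ θ, (∫ r in Ioi 0, radialIntegrand α f x θ r) ∂ν) -
          ∫ θ, (∫ r in Ioi 0, radialIntegrand α f y θ r) ∂ν| := by
        rw [genL_eq_integral_radialIntegrand, genL_eq_integral_radialIntegrand, ← mul_sub,
          abs_mul]
    _ ≤ (|c| + 1) * (K * M₂ * ‖x - y‖ ^ (2 - α)) := by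
        gcongr
        · linarith
        · exact h_sphere.trans_eq (by ring)
    _ = (|c| + 1) * K * M₂ * ‖x - y‖ ^ (2 - α) := by ring
end
end
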